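/- Let M be an NFA with L(M) ⊆ Enc and define, for p, q ∈ Q, rep_M(p, q) = pick_threshold_K(2^{|Q|²}, p, q) ∪ pick_merge_V(p, q), where pick_threshold is taken for the threshold-token sets K_M[p, q] and pick_merge for the vertex-token sets V_M[p, q]. Then L(M) contains a word encoding a positive Vertex Cover instance if and only if decode(L(M̂_{rep_M})) contains a positive Vertex Cover instance. -/

import Mathlib

/-!
Words of `L(M̂_rep)` lie in `L(M)`, as representatives are taken from the languages `L(M[p, q])`.
Conversely, take an accepting run of `M` on the encoding `▷1^k$ ∏ ▷a^{p_i}#▷a^{q_i}$` of a positive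
instance and replace each token by a representative read between the same two states. The
threshold becomes some `k'` with `k' = k` if `K_M[q₀, r]` is finite and `k' + 2 ≥ 2^{|Q|²}`
otherwise. The vertex `n` becomes the vertex whose stem `▷a^{n'}` is the shortlex-least element of
the intersection of the sets `V_M[p, q]/1` over all pairs `(p, q)` at which `▷a^n` can be read.
This renaming is a function of `n`, so covers are carried along; and it factors through a nonempty
subset of `Q²`, so the new graph has fewer than `2^{|Q|²}` vertices and, in the infinite case,
all of them but one form a small enough cover. The separator after a renamed stem is unchanged:
in `Enc` the separators alternate `$ # $ # ⋯`, so by reachability and co-reachability the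
separator read between `p` and `q` only depends on `(p, q)`.
-/

/-- The fixed five-letter alphabet Σ = {▷, 1, a, #, $}. -/
inductive Letter : Type
  | tri    -- ▷
  | one    -- 1
  | lett   -- a
  | hash   -- #
  | dollar -- $
deriving DecidableEq

/-- Words over the alphabet Σ. -/
abbrev Word := List Letter

/-- A nondeterministic finite automaton over the fixed alphabet `Letter`,
with state type `Q` (assumed finite via a `Fintype` instance where needed),
transition function `δ`, initial state `q0` and final states `F`. -/
structure NFA' (Q : Type) where
  δ : Q → Letter → Set Q
  q0 : Q
  F : Set Q

namespace NFA'

variable {Q : Type}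

/-- One step of the transition function on a set of states. -/
def stepSet (M : NFA' Q) (S : Set Q) (x : Letter) : Set Q := ⋃ q ∈ S, M.δ q x

/-- The extension of the transition function to words (acting on sets of states). -/
def evalFrom (M : NFA' Q) (S : Set Q) (w : Word) : Set Q := w.foldl M.stepSet S

/-- The language accepted by `M`. -/
def lang (M : NFA' Q) : Set Word := { w | ∃ q ∈ M.F, q ∈ M.evalFrom {M.q0} w }

/-- The automaton `M[p, q]`: same transitions, initial state `p`, unique final state `q`. -/
def between (M : NFA' Q) (p q : Q) : NFA' Q := ⟨M.δ, p, {q}⟩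

/-- Every state is reachable from the initial state. -/
def Reachable (M : NFA' Q) : Prop := ∀ q : Q, ∃ w : Word, q ∈ M.evalFrom {M.q0} w

/-- From every state some final state can be reached. -/
def CoReachable (M : NFA' Q) : Prop :=
  ∀ q : Q, ∃ w : Word, ∃ f ∈ M.F, f ∈ M.evalFrom {q} w

end NFA'

/-- `rep` is a representative function for `M`: each `rep p q` is a finite subset
of `L(M[p, q])`. -/
def IsRepFun {Q : Type} (M : NFA' Q) (rep : Q → Q → Set Word) : Prop :=
  ∀ p q : Q, (rep p q).Finite ∧ rep p q ⊆ (M.between p q).lang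

/-- The language `L(M̂_rep)`: all words obtained by concatenating representatives
along a path from the initial state to a final state. -/
def hatLang {Q : Type} (M : NFA' Q) (rep : Q → Q → Set Word) : Set Word :=
  { w | ∃ (m : ℕ) (u : Fin m → Word) (qs : Fin (m + 1) → Q),
      qs 0 = M.q0 ∧ qs (Fin.last m) ∈ M.F ∧
      (∀ i : Fin m, u i ∈ rep (qs i.castSucc) (qs i.succ)) ∧
      w = (List.ofFn u).flatten }

/-- The threshold token `▷1^k$`. -/
def thresholdTok (k : ℕ) : Word := Letter.tri :: (List.replicate k Letter.one ++ [Letter.dollar])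

/-- The left vertex token `▷a^p#`. -/
def leftTok (p : ℕ) : Word := Letter.tri :: (List.replicate p Letter.lett ++ [Letter.hash])

/-- The right vertex token `▷a^q$`. -/
def rightTok (q : ℕ) : Word := Letter.tri :: (List.replicate q Letter.lett ++ [Letter.dollar])

/-- The encoding `▷1^k$ ∏_i (▷a^{p_i}# ▷a^{q_i}$)` of a threshold `k` together with a
list of (encoded) edges. -/
def encode (k : ℕ) (es : List (ℕ × ℕ)) : Word :=
  thresholdTok k ++ (es.map (fun e => leftTok e.1 ++ rightTok e.2)).flatten

/-- The regular language `Enc = ▷1*$(▷a*#▷a*$)*` of all encodings. -/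
def Enc : Set Word := { w | ∃ (k : ℕ) (es : List (ℕ × ℕ)), w = encode k es }

/-- A token: a threshold token, a left vertex token, or a right vertex token. -/
def IsToken (w : Word) : Prop :=
  (∃ k, w = thresholdTok k) ∨ (∃ p, w = leftTok p) ∨ (∃ q, w = rightTok q)

/-- A representative function is token-preserving if all representatives are tokens. -/
def TokenPreserving {Q : Type} (rep : Q → Q → Set Word) : Prop :=
  ∀ p q : Q, ∀ w ∈ rep p q, IsToken w

/-- A finite simple undirected graph with vertices named by natural numbers:
a finite vertex set and a finite set of undirected edges. -/
structure VCGraph where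
  V : Finset ℕ
  E : Finset (Sym2 ℕ)

/-- `G` has a vertex cover of size at most `k`. -/
def HasVC (G : VCGraph) (k : ℕ) : Prop :=
  ∃ S : Finset ℕ, S ⊆ G.V ∧ S.card ≤ k ∧ ∀ e ∈ G.E, ∃ a ∈ S, a ∈ e

/-- `G` has an independent set of size at least `k`. -/
def HasIS (G : VCGraph) (k : ℕ) : Prop :=
  ∃ S : Finset ℕ, S ⊆ G.V ∧ k ≤ S.card ∧ ∀ a ∈ S, ∀ b ∈ S, s(a, b) ∉ G.E

/-- The graph described by a list of (encoded) edges: vertices are all the numbers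
occurring, edges are the non-loop pairs. -/
def graphOf (es : List (ℕ × ℕ)) : VCGraph where
  V := (es.map Prod.fst).toFinset ∪ (es.map Prod.snd).toFinset
  E := ((es.filter (fun e => e.1 ≠ e.2)).map (fun e => s(e.1, e.2))).toFinset

/-- `decode(w) = (G, k)` : the word `w ∈ Enc` encodes the graph `G` and threshold `k`. -/
def decodesTo (w : Word) (G : VCGraph) (k : ℕ) : Prop :=
  ∃ es : List (ℕ × ℕ), w = encode k es ∧ G = graphOf es

/-- The set of all threshold tokens (the language `▷1*$`). -/
def ThreshTokens : Set Word := { w | ∃ k, w = thresholdTok k }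

/-- The set of all vertex tokens (the language `▷a*(#|$)`). -/
def VertTokens : Set Word := { w | (∃ p, w = leftTok p) ∨ (∃ q, w = rightTok q) }

/-- The threshold-token sets `K_M[p, q] = L(M[p, q]) ∩ L(▷1*$)`. -/
def KM {Q : Type} (M : NFA' Q) (p q : Q) : Set Word := (M.between p q).lang ∩ ThreshTokens

/-- The vertex-token sets `V_M[p, q] = L(M[p, q]) ∩ L(▷a*(#|$))`. -/
def VM {Q : Type} (M : NFA' Q) (p q : Q) : Set Word := (M.between p q).lang ∩ VertTokens

/-- `u, qs` form a characteristic factorization (of `u₀u₁⋯u_m`) with respect to the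
states `qs 0 = q₀, qs 1, …`: the first factor is a threshold token from `K_M[q₀, q₁]`,
all later factors are vertex tokens from the corresponding `V_M`-sets, and the last
state is final. -/
def CharFact {Q : Type} (M : NFA' Q) {m : ℕ} (u : Fin (m + 1) → Word)
    (qs : Fin (m + 2) → Q) : Prop :=
  qs 0 = M.q0 ∧ qs (Fin.last (m + 1)) ∈ M.F ∧
  u 0 ∈ KM M (qs 0) (qs 1) ∧
  ∀ i : Fin (m + 1), 0 < i.val → u i ∈ VM M (qs i.castSucc) (qs i.succ)

/-- A fixed numbering of the alphabet, inducing a linear order on `Letter`. -/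
def letterIdx : Letter → ℕ
  | Letter.tri => 0
  | Letter.one => 1
  | Letter.lett => 2
  | Letter.hash => 3
  | Letter.dollar => 4

/-- Strict shortlex order on words: first by length, then lexicographically. -/
def slLT (u v : Word) : Prop :=
  u.length < v.length ∨
    (u.length = v.length ∧ List.Lex (fun a b => letterIdx a < letterIdx b) u v)

/-- Non-strict shortlex order. -/
def slLE (u v : Word) : Prop := slLT u v ∨ u = v

/-- `w` is the shortlex-smallest element of `S`. -/
def IsSlLeast (S : Set Word) (w : Word) : Prop := w ∈ S ∧ ∀ v ∈ S, slLE w v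

/-- The quotient `L/1` of a language: remove the last letter from every word. -/
def langDiv1 (L : Set Word) : Set Word := { w | ∃ σ : Letter, w ++ [σ] ∈ L }

/-- `pick_threshold_T(k, p, q)`: all of `T p q` if it is finite, otherwise the
shortlex-smallest element of `T p q` of length at least `k`. -/
def pickThreshold {Q : Type} (T : Q → Q → Set Word) (k : ℕ) (p q : Q) : Set Word :=
  { w | ((T p q).Finite ∧ w ∈ T p q) ∨
        (¬ (T p q).Finite ∧ IsSlLeast { v | v ∈ T p q ∧ k ≤ v.length } w) }

/-- The auxiliary function `pick_merge^G_T(p, q)`: for every `A ⊆ Q²` containing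
`(p, q)` whose intersection `⋂_{(p',q') ∈ A} T[p',q']/1` is nonempty, it contains the
shortlex-smallest element of that intersection. -/
def pickMergeG {Q : Type} (T : Q → Q → Set Word) (p q : Q) : Set Word :=
  { w | ∃ A : Set (Q × Q), (p, q) ∈ A ∧
        IsSlLeast (⋂ r ∈ A, langDiv1 (T r.1 r.2)) w }

/-- `pick_merge_T(p, q) = T[p, q] ∩ (pick_merge^G_T(p, q)·Σ)`. -/
def pickMerge {Q : Type} (T : Q → Q → Set Word) (p q : Q) : Set Word :=
  { x | x ∈ T p q ∧ ∃ w ∈ pickMergeG T p q, ∃ σ : Letter, x = w ++ [σ] }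

/-- `ps` is a family `pick_separate_T(s, t, ·, ·)`: for some linear order (injection
into ℕ) on the pairs of states, processed in this order, the value at a pair with
finite `T`-set is that whole set, and at a pair with infinite `T`-set it consists of
exactly the `s` shortlex-first elements `w` of `T p q` of length at least `t` whose
`w/1` avoids `v/1` for all `v` in the sets chosen at previously processed pairs. -/
def IsPickSeparate {Q : Type} (T : Q → Q → Set Word) (s t : ℕ)
    (ps : Q → Q → Set Word) : Prop :=
  ∃ ord : Q × Q → ℕ, Function.Injective ord ∧
    ∀ p q : Q,
      ((T p q).Finite → ps p q = T p q) ∧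
      (¬ (T p q).Finite →
        (∀ w ∈ ps p q, w ∈ T p q ∧ t ≤ w.length ∧
          ∀ p' q' : Q, ord (p', q') < ord (p, q) →
            ∀ v ∈ ps p' q', v.dropLast ≠ w.dropLast) ∧
        (ps p q).ncard = s ∧
        (∀ w : Word,
          (w ∈ T p q ∧ t ≤ w.length ∧
            ∀ p' q' : Q, ord (p', q') < ord (p, q) →
              ∀ v ∈ ps p' q', v.dropLast ≠ w.dropLast) →
          w ∉ ps p q → ∀ v ∈ ps p q, slLE v w))

section Shortlex

lemma slLT_asymm {u v : Word} (huv : slLT u v) (hvu : slLT v u) : False := by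
  have : Std.Asymm (fun a b : Letter => letterIdx a < letterIdx b) := ⟨fun _ _ h => lt_asymm h⟩
  rcases huv with h | ⟨h, huv⟩ <;> rcases hvu with h' | ⟨h', hvu⟩
  · omega
  · omega
  · omega
  · exact Std.Asymm.asymm _ _ huv hvu

lemma IsSlLeast.unique {S : Set Word} {w w' : Word} (hw : IsSlLeast S w) (hw' : IsSlLeast S w') :
    w = w' := by
  rcases hw.2 w' hw'.1 with h | h
  · rcases hw'.2 w hw.1 with h' | h'
    · exact (slLT_asymm h h').elim
    · exact h'.symm
  · exact h

lemma isSlLeast_sInf {f : ℕ → Word} (hf : StrictMono fun i => (f i).length) {S : Set Word}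
    (hS : S ⊆ Set.range f) {j : ℕ} (hj : f j ∈ S) : IsSlLeast S (f (sInf {i | f i ∈ S})) := by
  refine ⟨Nat.sInf_mem (s := {i | f i ∈ S}) ⟨j, hj⟩, fun v hv => ?_⟩
  obtain ⟨i, rfl⟩ := hS hv
  rcases (Nat.sInf_le (show i ∈ {i | f i ∈ S} from hv)).lt_or_eq with h | h
  · exact Or.inl (Or.inl (hf h))
  · exact Or.inr (by rw [h])

end Shortlex

section Tokens

open Letter

lemma strictMono_length_thresholdTok : StrictMono fun k => (thresholdTok k).length := by
  intro i j h
  simpa [thresholdTok] using h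

def stem (m : ℕ) : Word := tri :: List.replicate m lett

lemma leftTok_eq_stem (m : ℕ) : leftTok m = stem m ++ [hash] := by simp [leftTok, stem]

lemma rightTok_eq_stem (m : ℕ) : rightTok m = stem m ++ [dollar] := by simp [rightTok, stem]

lemma strictMono_length_stem : StrictMono fun m => (stem m).length := by
  intro i j h
  simpa [stem] using h

def vertexToks : List (ℕ × ℕ) → List Word
  | [] => []
  | e :: es => leftTok e.1 :: rightTok e.2 :: vertexToks es

lemma encode_eq_flatten (k : ℕ) (es : List (ℕ × ℕ)) :
    encode k es = (thresholdTok k :: vertexToks es).flatten := by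
  induction es with
  | nil => simp [encode, vertexToks]
  | cons e es ih => simp_all [encode, vertexToks]

def isSep : Letter → Bool
  | .hash | .dollar => true
  | _ => false

def seps (w : Word) : Word := w.filter isSep

lemma seps_append (u v : Word) : seps (u ++ v) = seps u ++ seps v := List.filter_append ..

lemma seps_stem (m : ℕ) : seps (stem m) = [] := by simp [seps, stem, isSep]

lemma seps_encode (k : ℕ) (es : List (ℕ × ℕ)) :
    seps (encode k es) = dollar :: (List.replicate es.length [hash, dollar]).flatten := by
  simp [seps, encode, thresholdTok, leftTok, rightTok, List.filter_flatten, Function.comp_def,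
    List.filter_cons, isSep, List.map_const']

def altSep (i : ℕ) : Letter := if Even i then dollar else hash

lemma eq_altSep_of_getElem?_seps_encode {k : ℕ} {es : List (ℕ × ℕ)} {i : ℕ} {σ : Letter}
    (h : (seps (encode k es))[i]? = some σ) : σ = altSep i := by
  rw [seps_encode] at h
  induction es generalizing i with
  | nil => cases i <;> simp_all [altSep]
  | cons e es ih =>
    match i with
    | 0 => simp_all [altSep]
    | 1 => simp_all [List.replicate_succ, altSep]
    | i + 2 =>
      simpa [altSep, Nat.even_add] using ih (by simpa [List.replicate_succ] using h)

lemma eq_altSep_of_mem_Enc {u v : Word} {σ : Letter} (h : u ++ σ :: v ∈ Enc) (hσ : isSep σ) :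
    σ = altSep (seps u).length := by
  obtain ⟨k, es, he⟩ := h
  apply eq_altSep_of_getElem?_seps_encode (k := k) (es := es)
  simp [← he, seps, hσ]

end Tokens

section Graphs

lemma mem_graphOf_V {es : List (ℕ × ℕ)} {v : ℕ} :
    v ∈ (graphOf es).V ↔ ∃ e ∈ es, v = e.1 ∨ v = e.2 := by
  simp only [graphOf, Finset.mem_union, List.mem_toFinset, List.mem_map]
  grind

lemma mem_graphOf_E {es : List (ℕ × ℕ)} {z : Sym2 ℕ} :
    z ∈ (graphOf es).E ↔ ∃ e ∈ es, e.1 ≠ e.2 ∧ z = s(e.1, e.2) := by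
  simp only [graphOf, List.mem_toFinset, List.mem_map, List.mem_filter, decide_eq_true_eq]
  grind

lemma HasVC.map {es : List (ℕ × ℕ)} {k : ℕ} (f : ℕ → ℕ) (h : HasVC (graphOf es) k) :
    HasVC (graphOf (es.map (Prod.map f f))) k := by
  classical
  obtain ⟨S, hSV, hSk, hS⟩ := h
  refine ⟨S.image f, fun a ha => ?_, Finset.card_image_le.trans hSk, fun z hz => ?_⟩
  · obtain ⟨b, hb, rfl⟩ := Finset.mem_image.mp ha
    obtain ⟨e, he, hbe⟩ := mem_graphOf_V.mp (hSV hb)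
    refine mem_graphOf_V.mpr ⟨Prod.map f f e, List.mem_map_of_mem he, ?_⟩
    rcases hbe with rfl | rfl <;> simp
  · obtain ⟨_, he', hne, rfl⟩ := mem_graphOf_E.mp hz
    obtain ⟨e, he, rfl⟩ := List.mem_map.mp he'
    obtain ⟨a, haS, hae⟩ := hS _ (mem_graphOf_E.mpr ⟨e, he, fun h => hne (by simp [h]), rfl⟩)
    refine ⟨f a, Finset.mem_image_of_mem f haS, ?_⟩
    rcases Sym2.mem_iff.mp hae with rfl | rfl <;> simp

lemma hasVC_of_card_le {es : List (ℕ × ℕ)} {k : ℕ} (h : (graphOf es).V.card ≤ k + 1) :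
    HasVC (graphOf es) k := by
  classical
  rcases (graphOf es).V.eq_empty_or_nonempty with hV | ⟨v, hv⟩
  · refine ⟨∅, by simp, by simp, fun z hz => ?_⟩
    obtain ⟨e, he, -, rfl⟩ := mem_graphOf_E.mp hz
    simpa [hV] using mem_graphOf_V.mpr ⟨e, he, Or.inl rfl⟩
  refine ⟨(graphOf es).V.erase v, Finset.erase_subset _ _, by
    rw [Finset.card_erase_of_mem hv]; omega, fun z hz => ?_⟩
  obtain ⟨e, he, hne, rfl⟩ := mem_graphOf_E.mp hz
  have h1 := mem_graphOf_V.mpr ⟨e, he, Or.inl rfl⟩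
  have h2 := mem_graphOf_V.mpr ⟨e, he, Or.inr rfl⟩
  by_cases h : e.1 = v
  · exact ⟨e.2, Finset.mem_erase.mpr ⟨h ▸ hne.symm, h2⟩, Sym2.mem_mk_right _ _⟩
  · exact ⟨e.1, Finset.mem_erase.mpr ⟨h, h1⟩, Sym2.mem_mk_left _ _⟩

end Graphs

namespace NFA'

variable {Q : Type} (M : NFA' Q)

def toNFA : NFA Letter Q := ⟨M.δ, {M.q0}, M.F⟩

lemma evalFrom_eq_toNFA : M.evalFrom = M.toNFA.evalFrom := rfl

lemma mem_lang_between {p q : Q} {w : Word} :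
    w ∈ (M.between p q).lang ↔ q ∈ M.evalFrom {p} w := by
  simp only [lang, between, Set.mem_ofPred_eq, Set.mem_singleton_iff, exists_eq_left]
  rfl

lemma mem_evalFrom_append {S : Set Q} {u v : Word} {q : Q} :
    q ∈ M.evalFrom S (u ++ v) ↔ ∃ r ∈ M.evalFrom S u, q ∈ M.evalFrom {r} v := by
  rw [evalFrom_eq_toNFA, NFA.evalFrom_append, NFA.mem_evalFrom_iff_exists]

end NFA'

section

variable {Q : Type}

def RepChain (rep : Q → Q → Set Word) : Q → List Word → Q → Prop
  | p, [], q => p = q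
  | p, t :: ts, q => ∃ r, t ∈ rep p r ∧ RepChain rep r ts q

lemma RepChain.mono {rep rep' : Q → Q → Set Word} (h : ∀ p q, rep p q ⊆ rep' p q) :
    ∀ {T : List Word} {p q : Q}, RepChain rep p T q → RepChain rep' p T q
  | [], _, _, hc => hc
  | _ :: _, _, _, ⟨r, ht, hc⟩ => ⟨r, h _ _ ht, hc.mono h⟩

lemma RepChain.exists_mem {rep : Q → Q → Set Word} :
    ∀ {T : List Word} {p q : Q}, RepChain rep p T q → ∀ t ∈ T, ∃ a b, t ∈ rep a b
  | _ :: _, _, _, ⟨r, ht, hc⟩, t, hmem => by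
    rcases List.mem_cons.mp hmem with rfl | hmem
    · exact ⟨_, r, ht⟩
    · exact hc.exists_mem t hmem

lemma repChain_between_iff (M : NFA' Q) :
    ∀ {T : List Word} {p q : Q},
      RepChain (fun a b => (M.between a b).lang) p T q ↔ q ∈ M.evalFrom {p} T.flatten
  | [], p, q => by simp [RepChain, NFA'.evalFrom, eq_comm]
  | t :: ts, p, q => by
    simp only [RepChain, List.flatten_cons, M.mem_evalFrom_append, M.mem_lang_between,
      repChain_between_iff]

lemma repChain_iff_exists_fin {rep : Q → Q → Set Word} :
    ∀ {T : List Word} {p q : Q}, RepChain rep p T q ↔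
      ∃ qs : Fin (T.length + 1) → Q, qs 0 = p ∧ qs (Fin.last _) = q ∧
        ∀ i : Fin T.length, T[i] ∈ rep (qs i.castSucc) (qs i.succ)
  | [], p, q => by
    simp only [RepChain, List.length_nil, Fin.last_zero, IsEmpty.forall_iff, and_true]
    exact ⟨fun h => ⟨fun _ => p, rfl, h⟩, fun ⟨qs, h0, h1⟩ => h0 ▸ h1⟩
  | t :: ts, p, q => by
    simp only [RepChain, repChain_iff_exists_fin, List.length_cons]
    constructor
    · rintro ⟨r, ht, qs, h0, hl, hs⟩
      refine ⟨Fin.cons p qs, rfl, by simpa [← Fin.succ_last] using hl, Fin.cases ?_ fun i => ?_⟩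
      · simpa [h0] using ht
      · simpa [← Fin.succ_castSucc] using hs i
    · rintro ⟨qs, h0, hl, hs⟩
      refine ⟨qs 1, by simpa [h0] using hs 0, fun i => qs i.succ, rfl, by simpa using hl,
        fun i => ?_⟩
      simpa [← Fin.succ_castSucc] using hs i.succ

lemma mem_hatLang_iff {M : NFA' Q} {rep : Q → Q → Set Word} {w : Word} :
    w ∈ hatLang M rep ↔
      ∃ (T : List Word) (q : Q), q ∈ M.F ∧ RepChain rep M.q0 T q ∧ w = T.flatten := by
  constructor
  · rintro ⟨m, u, qs, h0, hF, hu, rfl⟩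
    refine ⟨List.ofFn u, qs (Fin.last m), hF, repChain_iff_exists_fin.mpr ?_, rfl⟩
    refine ⟨qs ∘ Fin.cast (by simp), by simpa using h0, by simp, fun i => ?_⟩
    simpa [Fin.cast] using hu (i.cast (by simp))
  · rintro ⟨T, q, hF, hc, rfl⟩
    obtain ⟨qs, h0, hl, hs⟩ := repChain_iff_exists_fin.mp hc
    exact ⟨T.length, fun i => T[i], qs, h0, hl ▸ hF, hs, by simp⟩

section Pick

lemma pickThreshold_subset (T : Q → Q → Set Word) (k : ℕ) (p q : Q) :
    pickThreshold T k p q ⊆ T p q := by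
  rintro w (⟨-, hw⟩ | ⟨-, hw⟩)
  exacts [hw, hw.1.1]

lemma pickMerge_subset (T : Q → Q → Set Word) (p q : Q) : pickMerge T p q ⊆ T p q :=
  fun _ hx => hx.1

lemma dropLast_mem_pickMergeG {T : Q → Q → Set Word} {p q : Q} {x : Word}
    (hx : x ∈ pickMerge T p q) : x.dropLast ∈ pickMergeG T p q := by
  obtain ⟨-, w, hw, σ, rfl⟩ := hx
  rwa [List.dropLast_concat]

lemma ncard_setOf_nonempty (α : Type) [Fintype α] :
    {A : Set α | A.Nonempty}.ncard = 2 ^ Fintype.card α - 1 := by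
  have : {A : Set α | A.Nonempty} = Set.univ \ {∅} := by
    ext A
    simp [Set.nonempty_iff_ne_empty]
  rw [this, Set.ncard_sdiff_singleton_of_mem (Set.mem_univ _), Set.ncard_univ,
    Nat.card_eq_fintype_card, Fintype.card_set]

/-- Distinct words picked by `pickMergeG` are shortlex-least elements for distinct nonempty sets
of pairs. -/
lemma ncard_le_of_subset_iUnion_pickMergeG [Fintype Q] (T : Q → Q → Set Word) {W : Set Word}
    (hW : W ⊆ ⋃ p, ⋃ q, pickMergeG T p q) : W.ncard ≤ 2 ^ Fintype.card (Q × Q) - 1 := by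
  let least : Set (Q × Q) → Word := fun A =>
    Classical.epsilon (IsSlLeast (⋂ r ∈ A, langDiv1 (T r.1 r.2)))
  have hsub : W ⊆ least '' {A | A.Nonempty} := by
    intro w hw
    obtain ⟨p, q, A, hA, hw⟩ := Set.mem_iUnion₂.mp (hW hw)
    exact ⟨A, ⟨_, hA⟩, (Classical.epsilon_spec ⟨w, hw⟩).unique hw⟩
  calc W.ncard
      ≤ (least '' {A | A.Nonempty}).ncard := Set.ncard_le_ncard hsub (Set.toFinite _)
    _ ≤ {A : Set (Q × Q) | A.Nonempty}.ncard := Set.ncard_image_le (Set.toFinite _)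
    _ = 2 ^ Fintype.card (Q × Q) - 1 := ncard_setOf_nonempty _

lemma exists_thresholdTok_mem_pickThreshold {T : Q → Q → Set Word} {p q : Q}
    (hT : T p q ⊆ ThreshTokens) {k : ℕ} (hk : thresholdTok k ∈ T p q) (N : ℕ) :
    ∃ k', thresholdTok k' ∈ pickThreshold T N p q ∧ (k' = k ∨ N ≤ k' + 2) := by
  by_cases hfin : (T p q).Finite
  · exact ⟨k, Or.inl ⟨hfin, hk⟩, Or.inl rfl⟩
  have hidx : {j | thresholdTok j ∈ T p q}.Infinite := fun hidx =>
    hfin ((hidx.image thresholdTok).subset fun w hw => by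
      obtain ⟨j, rfl⟩ := hT hw
      exact ⟨j, hw, rfl⟩)
  obtain ⟨j, hj, hNj⟩ := hidx.exists_gt N
  have hS : {v | v ∈ T p q ∧ N ≤ v.length} ⊆ Set.range thresholdTok :=
    fun v hv => (hT hv.1).imp fun _ h => h.symm
  have hleast := isSlLeast_sInf strictMono_length_thresholdTok hS
    (show thresholdTok j ∈ {v | v ∈ T p q ∧ N ≤ v.length} from ⟨hj, by simp [thresholdTok]; omega⟩)
  refine ⟨_, Or.inr ⟨hfin, hleast⟩, Or.inr ?_⟩
  simpa [thresholdTok] using hleast.1.2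

end Pick

section Vertices

open Letter

lemma mem_vertTokens_iff {x : Word} : x ∈ VertTokens ↔ ∃ m σ, isSep σ ∧ x = stem m ++ [σ] := by
  constructor
  · rintro (⟨m, rfl⟩ | ⟨m, rfl⟩)
    exacts [⟨m, hash, rfl, leftTok_eq_stem m⟩, ⟨m, dollar, rfl, rightTok_eq_stem m⟩]
  · rintro ⟨m, σ, hσ, rfl⟩
    cases σ <;> simp_all [isSep, VertTokens, leftTok_eq_stem, rightTok_eq_stem]

lemma langDiv1_VM_subset_range_stem (M : NFA' Q) (p q : Q) :
    langDiv1 (VM M p q) ⊆ Set.range stem := by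
  rintro w ⟨τ, -, hw⟩
  obtain ⟨m, σ, -, he⟩ := mem_vertTokens_iff.mp hw
  exact ⟨m, (List.append_inj' he rfl).1.symm⟩

variable {M : NFA' Q}

/-- Both separators are `altSep` of the number of separators in a word leading from `q₀` to `p`. -/
lemma sep_eq_of_mem_between (hEnc : M.lang ⊆ Enc) (hre : M.Reachable) (hco : M.CoReachable)
    {p q : Q} {x y : Word} {σ τ : Letter} (hx : seps x = []) (hy : seps y = [])
    (hσ : isSep σ) (hτ : isSep τ)
    (hxσ : x ++ [σ] ∈ (M.between p q).lang) (hyτ : y ++ [τ] ∈ (M.between p q).lang) : σ = τ := by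
  obtain ⟨u, hu⟩ := hre p
  obtain ⟨v, f, hf, hv⟩ := hco q
  have key : ∀ z ρ, seps z = [] → isSep ρ → z ++ [ρ] ∈ (M.between p q).lang →
      ρ = altSep (seps u).length := by
    intro z ρ hz hρ hzρ
    have hmem : (u ++ z) ++ ρ :: v ∈ M.lang := by
      refine ⟨f, hf, ?_⟩
      rw [show (u ++ z) ++ ρ :: v = u ++ ((z ++ [ρ]) ++ v) by simp, M.mem_evalFrom_append]
      exact ⟨p, hu, M.mem_evalFrom_append.mpr ⟨q, M.mem_lang_between.mp hzρ, hv⟩⟩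
    simpa [seps_append, hz] using eq_altSep_of_mem_Enc (hEnc hmem) hρ
  rw [key x σ hx hσ hxσ, key y τ hy hτ hyτ]

def stemPairs (M : NFA' Q) (n : ℕ) : Set (Q × Q) := {r | stem n ∈ langDiv1 (VM M r.1 r.2)}

/-- The vertex `n` is renamed to the vertex whose stem `pickMergeG` picks for the set of all
pairs of states between which the stem of `n` can be read. -/
noncomputable def vertexRep (M : NFA' Q) (n : ℕ) : ℕ :=
  sInf {m | stem m ∈ ⋂ r ∈ stemPairs M n, langDiv1 (VM M r.1 r.2)}

lemma isSlLeast_stem_vertexRep {n : ℕ} {r : Q × Q} (hr : r ∈ stemPairs M n) :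
    IsSlLeast (⋂ r ∈ stemPairs M n, langDiv1 (VM M r.1 r.2)) (stem (vertexRep M n)) :=
  isSlLeast_sInf strictMono_length_stem
    ((Set.biInter_subset_of_mem hr).trans (langDiv1_VM_subset_range_stem M r.1 r.2))
    (Set.mem_iInter₂.mpr fun _ h => h)

lemma stem_vertexRep_append_mem_pickMerge (hEnc : M.lang ⊆ Enc) (hre : M.Reachable)
    (hco : M.CoReachable) {p q : Q} {n : ℕ} {σ : Letter} (hσ : isSep σ)
    (h : stem n ++ [σ] ∈ (M.between p q).lang) :
    stem (vertexRep M n) ++ [σ] ∈ pickMerge (VM M) p q := by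
  have hpq : (p, q) ∈ stemPairs M n := ⟨σ, h, mem_vertTokens_iff.mpr ⟨n, σ, hσ, rfl⟩⟩
  have hleast := isSlLeast_stem_vertexRep hpq
  obtain ⟨τ, hτ, hτV⟩ := Set.mem_iInter₂.mp hleast.1 (p, q) hpq
  obtain ⟨_, τ', hτ', he⟩ := mem_vertTokens_iff.mp hτV
  obtain rfl : τ = τ' := by simpa using (List.append_inj' he rfl).2
  obtain rfl := sep_eq_of_mem_between hEnc hre hco (seps_stem _) (seps_stem _) hτ' hσ hτ h
  exact ⟨⟨hτ, hτV⟩, _, ⟨stemPairs M n, hpq, hleast⟩, τ, rfl⟩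

lemma repChain_vertexToks_map_vertexRep (hEnc : M.lang ⊆ Enc) (hre : M.Reachable)
    (hco : M.CoReachable) : ∀ {es : List (ℕ × ℕ)} {p q : Q},
      RepChain (fun a b => (M.between a b).lang) p (vertexToks es) q →
      RepChain (pickMerge (VM M)) p
        (vertexToks (es.map (Prod.map (vertexRep M) (vertexRep M)))) q
  | [], _, _, h => h
  | _ :: _, _, _, ⟨r, hl, r', hr, hc⟩ => by
    rw [leftTok_eq_stem] at hl
    rw [rightTok_eq_stem] at hr
    refine ⟨r, ?_, r', ?_, repChain_vertexToks_map_vertexRep hEnc hre hco hc⟩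
    · simpa [leftTok_eq_stem] using stem_vertexRep_append_mem_pickMerge hEnc hre hco rfl hl
    · simpa [rightTok_eq_stem] using stem_vertexRep_append_mem_pickMerge hEnc hre hco rfl hr

lemma mem_vertexToks {es : List (ℕ × ℕ)} {e : ℕ × ℕ} (he : e ∈ es) :
    leftTok e.1 ∈ vertexToks es ∧ rightTok e.2 ∈ vertexToks es := by
  induction es with
  | nil => simp at he
  | cons e' es ih =>
    rcases List.mem_cons.mp he with rfl | he
    · simp [vertexToks]
    · simp [vertexToks, ih he]

lemma card_V_le_of_repChain_pickMerge [Fintype Q] {es : List (ℕ × ℕ)} {p q : Q}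
    (h : RepChain (pickMerge (VM M)) p (vertexToks es) q) :
    (graphOf es).V.card ≤ 2 ^ Fintype.card (Q × Q) - 1 := by
  have hstem : Function.Injective stem := fun a b h =>
    strictMono_length_stem.injective (congrArg List.length h)
  rw [← Set.ncard_coe_finset, ← Set.ncard_image_of_injective _ hstem]
  refine ncard_le_of_subset_iUnion_pickMergeG (VM M) ?_
  rintro _ ⟨v, hv, rfl⟩
  obtain ⟨e, he, hve⟩ := mem_graphOf_V.mp hv
  obtain ⟨t, ht, htv⟩ : ∃ t ∈ vertexToks es, t.dropLast = stem v := by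
    rcases hve with rfl | rfl
    exacts [⟨_, (mem_vertexToks he).1, by simp [leftTok_eq_stem]⟩,
      ⟨_, (mem_vertexToks he).2, by simp [rightTok_eq_stem]⟩]
  obtain ⟨a, b, hab⟩ := h.exists_mem t ht
  exact Set.mem_iUnion₂.mpr ⟨a, b, htv ▸ dropLast_mem_pickMergeG hab⟩

end Vertices

end

/-- For `rep(p,q) = pick_threshold_K(2^{|Q|²}, p, q) ∪ pick_merge_V(p, q)`
(with the threshold-token sets `K_M` and the vertex-token sets `V_M`), `L(M)` contains an
encoded positive Vertex Cover instance iff the finite core `decode(L(M̂_rep))` contains a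
positive Vertex Cover instance. -/
theorem stmt9 {Q : Type} [Fintype Q] (M : NFA' Q)
    (hEnc : M.lang ⊆ Enc) (hre : M.Reachable) (hco : M.CoReachable)
    (rep : Q → Q → Set Word)
    (hrepdef : ∀ p q : Q,
      rep p q = pickThreshold (KM M) (2 ^ (Fintype.card Q) ^ 2) p q ∪ pickMerge (VM M) p q) :
    (∃ w ∈ M.lang, ∃ (G : VCGraph) (k : ℕ), decodesTo w G k ∧ HasVC G k) ↔
      (∃ w ∈ hatLang M rep, ∃ (G : VCGraph) (k : ℕ), decodesTo w G k ∧ HasVC G k) := by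
  constructor
  · rintro ⟨_, ⟨qf, hqf, hrun⟩, _, k, ⟨es, rfl, rfl⟩, hVC⟩
    rw [encode_eq_flatten, ← repChain_between_iff] at hrun
    obtain ⟨r, hthr, hrest⟩ := hrun
    obtain ⟨k', hk', hk'k⟩ := exists_thresholdTok_mem_pickThreshold (T := KM M)
      Set.inter_subset_right ⟨hthr, k, rfl⟩ (2 ^ Fintype.card Q ^ 2)
    have hrest' := repChain_vertexToks_map_vertexRep hEnc hre hco hrest
    refine ⟨_, mem_hatLang_iff.mpr ⟨thresholdTok k' :: vertexToks _, qf, hqf,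
      ⟨r, ?_, hrest'.mono fun p q => ?_⟩, encode_eq_flatten k' _⟩, _, k', ⟨_, rfl, rfl⟩, ?_⟩
    · exact hrepdef M.q0 r ▸ Or.inl hk'
    · exact hrepdef p q ▸ Set.subset_union_right
    rcases hk'k with rfl | hN
    · exact hVC.map _
    · have hV := card_V_le_of_repChain_pickMerge hrest'
      rw [Fintype.card_prod, ← sq] at hV
      exact hasVC_of_card_le (by omega)
  · rintro ⟨_, hw, rest⟩
    obtain ⟨T, q, hq, hc, rfl⟩ := mem_hatLang_iff.mp hw
    refine ⟨_, ⟨q, hq, (repChain_between_iff M).mp (hc.mono fun p q => ?_)⟩, rest⟩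
    rw [hrepdef]
    exact Set.union_subset ((pickThreshold_subset _ _ _ _).trans Set.inter_subset_left)
      ((pickMerge_subset _ _ _).trans Set.inter_subset_left)
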